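/- Let Ω be a Cantor group, f ∈ C(Ω,ℝ), and p a positive integer. If there exist ω₀ ∈ Ω and a minimal translation T : Ω → Ω such that f(T^{p+m}(ω₀)) = f(T^m(ω₀)) for every m ∈ ℤ, then for every minimal translation T̃ : Ω → Ω, f is p-periodic with respect to T̃, i.e., f(T̃^p(ω)) = f(ω) for every ω ∈ Ω. -/

import Mathlib

/-- The translation `T(ω) = ω·a` is minimal: every `T`-orbit is dense. -/
def IsMinimalTranslation {Ω : Type*} [TopologicalSpace Ω] [CommGroup Ω] (a : Ω) : Prop :=
  ∀ ω : Ω, Dense (Set.range fun n : ℤ => ω * a ^ n)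

/-- `Ω` has no isolated points. -/
def NoIsolatedPoints (Ω : Type*) [TopologicalSpace Ω] : Prop :=
  ∀ ω : Ω, Filter.NeBot (nhdsWithin ω {ω}ᶜ)

/-!
The right periods of `f` form a subgroup, which is closed when `f` is continuous. The hypothesis
says `f(ω₀ aᵐ a^p) = f(ω₀ aᵐ)` on the dense orbit of `ω₀`, so by continuity `a^p` is a period,
and hence so is everything in the closure of `⟨a^p⟩`. Finally `x ↦ x^p` is continuous and maps
the dense subgroup `⟨a⟩` into `⟨a^p⟩`, so `b^p` lies in that closure for every `b`.
-/

open Set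

section Periods

variable {G X : Type*} [Group G]

def periodSubgroup (f : G → X) : Subgroup G where
  carrier := {g | ∀ x, f (x * g) = f x}
  mul_mem' {g h} hg hh x := by rw [← mul_assoc, hh, hg]
  one_mem' x := by rw [mul_one]
  inv_mem' {g} hg x := by rw [← hg (x * g⁻¹), inv_mul_cancel_right]

variable [TopologicalSpace G] [ContinuousMul G] [TopologicalSpace X] [T2Space X]

theorem isClosed_periodSubgroup {f : G → X} (hf : Continuous f) :
    IsClosed (periodSubgroup f : Set G) := by
  have hclosed : IsClosed (⋂ x, {g | f (x * g) = f x}) :=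
    isClosed_iInter fun x => isClosed_eq (hf.comp (continuous_const_mul x)) continuous_const
  rwa [← ofPred_forall] at hclosed

theorem zpow_mem_periodSubgroup_of_dense_orbit {f : G → X} (hf : Continuous f) {a x₀ : G}
    (ha : Dense (range fun n : ℤ => x₀ * a ^ n)) {k : ℤ}
    (hper : ∀ m : ℤ, f (x₀ * a ^ (k + m)) = f (x₀ * a ^ m)) :
    a ^ k ∈ periodSubgroup f := by
  have hcomp : (fun x => f (x * a ^ k)) = f := by
    refine Continuous.ext_on ha (hf.comp (continuous_mul_const _)) hf ?_
    rintro _ ⟨m, rfl⟩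
    simp only [mul_assoc, ← zpow_add, add_comm m k, hper]
  exact congrFun hcomp

theorem closure_zpowers_le_periodSubgroup {f : G → X} (hf : Continuous f) {g : G}
    (hg : g ∈ periodSubgroup f) : closure (Subgroup.zpowers g : Set G) ⊆ periodSubgroup f :=
  closure_minimal (SetLike.coe_subset_coe.mpr (Subgroup.zpowers_le.mpr hg))
    (isClosed_periodSubgroup hf)

end Periods

theorem pow_mem_closure_zpowers_pow {G : Type*} [Group G] [TopologicalSpace G] [ContinuousMul G]
    {a : G} (ha : Dense (Subgroup.zpowers a : Set G)) (b : G) (n : ℕ) :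
    b ^ n ∈ closure (Subgroup.zpowers (a ^ n) : Set G) := by
  refine map_mem_closure (f := (· ^ n)) (continuous_pow n) (ha b) ?_
  rintro _ ⟨m, rfl⟩
  exact ⟨m, by simp only [← zpow_natCast, ← zpow_mul, mul_comm]⟩

theorem statement_14_general {Ω : Type*} [TopologicalSpace Ω] [CommGroup Ω] [IsTopologicalGroup Ω]
    (f : C(Ω, ℝ)) (p : ℕ)
    (h : ∃ a : Ω, IsMinimalTranslation a ∧
      ∃ ω₀ : Ω, ∀ m : ℤ, f (ω₀ * a ^ ((p : ℤ) + m)) = f (ω₀ * a ^ m)) :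
    ∀ b : Ω, IsMinimalTranslation b → ∀ ω : Ω, f (ω * b ^ (p : ℕ)) = f ω := by
  obtain ⟨a, ha, ω₀, hper⟩ := h
  have hap : a ^ p ∈ periodSubgroup f := by
    simpa only [zpow_natCast] using
      zpow_mem_periodSubgroup_of_dense_orbit f.continuous (ha ω₀) hper
  have hdense : Dense (Subgroup.zpowers a : Set Ω) := by
    simpa only [Subgroup.coe_zpowers, one_mul] using ha 1
  intro b _
  exact closure_zpowers_le_periodSubgroup f.continuous hap
    (pow_mem_closure_zpowers_pow hdense b p)

/-- Let `Ω` be a Cantor group, `f ∈ C(Ω,ℝ)` and `p` a positive integer.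
If `f(T^{p+m}(ω₀)) = f(T^m(ω₀))` for some `ω₀ ∈ Ω`, some minimal translation `T` (by `a`) and
all `m ∈ ℤ`, then for every minimal translation `T̃` (by `b`), `f` is `p`-periodic with respect
to `T̃`: `f(T̃^p(ω)) = f(ω)` for all `ω ∈ Ω`. -/
theorem statement_14 {Ω : Type*} [TopologicalSpace Ω] [CommGroup Ω] [IsTopologicalGroup Ω]
    [CompactSpace Ω] [TotallyDisconnectedSpace Ω] (hni : NoIsolatedPoints Ω)
    (f : C(Ω, ℝ)) (p : ℕ) (hp : 0 < p)
    (h : ∃ a : Ω, IsMinimalTranslation a ∧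
      ∃ ω₀ : Ω, ∀ m : ℤ, f (ω₀ * a ^ ((p : ℤ) + m)) = f (ω₀ * a ^ m)) :
    ∀ b : Ω, IsMinimalTranslation b → ∀ ω : Ω, f (ω * b ^ (p : ℕ)) = f ω :=
  statement_14_general f p h
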